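/- Assume m > 2 and n > m+1. Let N = (β_A : A ⊆ {2,…,n}, |A| = m−1) ⊆ K[x_{i,j}]. Then N^(2) ≠ N², i.e., the second symbolic power of N strictly contains N². More precisely, the product ν of all variables x_{i,j}, (i,j) ∈ V, lies in N^(2) but not in N². -/

import Mathlib

open MvPolynomial Finset

/-- The set `V = {(i,j) ∈ [m]×[n] : m−i < j ≤ n−i+1}` (1-based indices). -/
def Vset (m n : ℕ) : Finset (ℕ × ℕ) :=
  ((Finset.Icc 1 m) ×ˢ (Finset.Icc 1 n)).filter
    (fun p => m - p.1 < p.2 ∧ p.2 ≤ n - p.1 + 1)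

/-- `a : ℕ → ℕ` represents an `(m−1)`-element subset `A = {a 1 < … < a (m−1)} ⊆ {2,…,n}`,
together with the conventions `a 0 = 1` and `a m = n + 1`. -/
def SubsetRep (m n : ℕ) (a : ℕ → ℕ) : Prop :=
  a 0 = 1 ∧ a m = n + 1 ∧ ∀ i < m, a i < a (i + 1)

/-- The region `D_A = {(i,j) ∈ V : a_{m−i} ≤ j < a_{m−i+1}}`. -/
def Dset (m n : ℕ) (a : ℕ → ℕ) : Finset (ℕ × ℕ) :=
  (Vset m n).filter (fun p => a (m - p.1) ≤ p.2 ∧ p.2 < a (m - p.1 + 1))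

variable (K : Type*) [Field K]

/-- The squarefree monomial `β_A = ∏_{(i,j) ∈ V ∖ D_A} x_{i,j}`. -/
noncomputable def betaM (m n : ℕ) (a : ℕ → ℕ) : MvPolynomial (ℕ × ℕ) K :=
  ∏ p ∈ Vset m n \ Dset m n a, X p

/-- The antidiagonal monomial `α_j = ∏_{i=1}^m x_{m−i+1, j+i−1}`. -/
noncomputable def alphaM (m : ℕ) (j : ℕ) : MvPolynomial (ℕ × ℕ) K :=
  ∏ i ∈ Finset.Icc 1 m, X (m - i + 1, j + i - 1)

/-- The ideal `N` generated by the monomials `β_A` for all `(m−1)`-element subsets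
`A ⊆ {2,…,n}`. -/
noncomputable def Nideal (m n : ℕ) : Ideal (MvPolynomial (ℕ × ℕ) K) :=
  Ideal.span { f | ∃ a : ℕ → ℕ, SubsetRep m n a ∧ f = betaM K m n a }

/-- `A k`, `1 ≤ k ≤ s`, is a chain `A₁ ≤ … ≤ A_s` of `(m−1)`-element subsets of `{2,…,n}`,
where `≤` is the componentwise partial order. -/
def BetaChain (m n s : ℕ) (A : ℕ → ℕ → ℕ) : Prop :=
  (∀ k, 1 ≤ k → k ≤ s → SubsetRep m n (A k)) ∧
    (∀ k, 1 ≤ k → k + 1 ≤ s → ∀ i ≤ m, A k i ≤ A (k + 1) i)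

/-- `W^{[2]}` : the ideal generated by the squares of all the monomials in `W`. -/
noncomputable def bracketTwo {σ : Type*} (W : Ideal (MvPolynomial σ K)) :
    Ideal (MvPolynomial σ K) :=
  Ideal.span { g | ∃ d : σ →₀ ℕ, (monomial d (1 : K)) ∈ W ∧ g = (monomial d (1 : K)) ^ 2 }

/-- The symbolic power `I^{(n)} = ⋂_{p ∈ Min(I)} (pⁿ R_p ∩ R)`. -/
noncomputable def symbolicPower {R : Type*} [CommRing R] (I : Ideal R) (n : ℕ) : Ideal R :=
  ⨅ p : {q : Ideal R // q ∈ I.minimalPrimes},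
    letI : p.1.IsPrime := p.2.1.1
    ((p.1 ^ n).map (algebraMap R (Localization.AtPrime p.1))).comap
      (algebraMap R (Localization.AtPrime p.1))

section AuxStmt12

variable {m n : ℕ}

lemma prodX {σ K : Type*} [Field K] [DecidableEq σ] (s : Finset σ) :
    (∏ p ∈ s, (X p : MvPolynomial σ K)) = monomial (∑ p ∈ s, Finsupp.single p 1) 1 := by
  induction s using Finset.induction with
  | empty => simp [monomial_zero']
  | insert _ _ h ih =>
      rw [Finset.prod_insert h, ih, Finset.sum_insert h, ← pow_one (X _), X_pow_eq_monomial,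
        monomial_mul, one_mul]

lemma sum_single_apply {σ : Type*} [DecidableEq σ] {s : Finset σ} {q : σ} (hq : q ∈ s) :
    (∑ p ∈ s, Finsupp.single p 1) q = 1 := by
  rw [Finset.sum_apply']
  simp [Finsupp.single_apply, Finset.sum_ite_eq' s q (fun _ => 1), hq]

lemma mem_Vset {x : ℕ × ℕ} : x ∈ Vset m n ↔
    1 ≤ x.1 ∧ x.1 ≤ m ∧ 1 ≤ x.2 ∧ x.2 ≤ n ∧ m - x.1 < x.2 ∧ x.2 ≤ n - x.1 + 1 := by
  simp [Vset, and_assoc]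

lemma subsetRep_mono {a : ℕ → ℕ} (ha : SubsetRep m n a) :
    ∀ i j, i ≤ j → j ≤ m → a i ≤ a j := by
  have key : ∀ d i, i + d ≤ m → a i ≤ a (i + d) := by
    intro d
    induction d with
    | zero => intro i _; simp
    | succ d ih =>
        intro i h
        have h1 := ih i (by omega)
        have h2 := ha.2.2 (i + d) (by omega)
        have e : i + (d + 1) = (i + d) + 1 := by omega
        rw [e]
        omega
  intro i j hij hj
  have h := key (j - i) i (by omega)
  rw [show i + (j - i) = j by omega] at h
  exact h

lemma pt_mem_Vset (hm : 2 < m) (hn : m + 1 < n) {t : ℕ} (ht : t < 3) :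
    ((m - t, 3) : ℕ × ℕ) ∈ Vset m n := by
  rw [mem_Vset]; simp; omega

lemma dset_uniq (hm : 2 < m) {a : ℕ → ℕ} (ha : SubsetRep m n a) {t1 t2 : ℕ}
    (h1 : t1 < 3) (h2 : t2 < 3) (d1 : ((m - t1, 3) : ℕ × ℕ) ∈ Dset m n a)
    (d2 : ((m - t2, 3) : ℕ × ℕ) ∈ Dset m n a) : t1 = t2 := by
  have mono := subsetRep_mono ha
  simp only [Dset, Finset.mem_filter] at d1 d2
  have e1 : m - (m - t1) = t1 := by omega
  have e2 : m - (m - t2) = t2 := by omega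
  rw [e1] at d1; rw [e2] at d2
  by_contra hne
  rcases Nat.lt_or_ge t1 t2 with h | h
  · have := mono (t1 + 1) t2 (by omega) (by omega); omega
  · have := mono (t2 + 1) t1 (by omega) (by omega); omega

lemma cover (hm : 2 < m) (hn : m + 1 < n) {x : ℕ × ℕ} (hx : x ∈ Vset m n) :
    ∃ a, SubsetRep m n a ∧ x ∈ Dset m n a := by
  obtain ⟨i, j⟩ := x
  rw [mem_Vset] at hx
  simp only at hx
  obtain ⟨hi1, hi2, hj1, hj2, hj3, hj4⟩ := hx
  refine ⟨fun t => if t = 0 then 1 else if t ≤ m - i then t + 1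
      else if t < m then j + (t - (m - i)) else n + 1, ⟨?_, ?_, ?_⟩, ?_⟩
  · simp
  · simp only; split_ifs <;> first | contradiction | omega
  · intro t ht; simp only; split_ifs <;> first | contradiction | omega
  · simp only [Dset, Finset.mem_filter, mem_Vset]
    refine ⟨⟨hi1, hi2, hj1, hj2, hj3, hj4⟩, ?_, ?_⟩ <;>
      · split_ifs <;> first | contradiction | omega

lemma exists_common (hm : 2 < m) (hn : m + 1 < n) {a b : ℕ → ℕ}
    (ha : SubsetRep m n a) (hb : SubsetRep m n b) :
    ∃ x, x ∈ Vset m n \ Dset m n a ∧ x ∈ Vset m n \ Dset m n b := by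
  by_contra h
  push_neg at h
  have H : ∀ t < 3, ((m - t, 3) : ℕ × ℕ) ∈ Dset m n a ∨ ((m - t, 3) : ℕ × ℕ) ∈ Dset m n b := by
    intro t ht
    by_contra hc
    push_neg at hc
    have hv := pt_mem_Vset hm hn ht
    exact (h (m - t, 3) (Finset.mem_sdiff.mpr ⟨hv, hc.1⟩)) (Finset.mem_sdiff.mpr ⟨hv, hc.2⟩)
  rcases H 0 (by norm_num) with d0 | d0 <;> rcases H 1 (by norm_num) with d1 | d1 <;>
    rcases H 2 (by norm_num) with d2 | d2
  · exact absurd (dset_uniq hm ha (by norm_num) (by norm_num) d0 d1) (by norm_num)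
  · exact absurd (dset_uniq hm ha (by norm_num) (by norm_num) d0 d1) (by norm_num)
  · exact absurd (dset_uniq hm ha (by norm_num) (by norm_num) d0 d2) (by norm_num)
  · exact absurd (dset_uniq hm hb (by norm_num) (by norm_num) d1 d2) (by norm_num)
  · exact absurd (dset_uniq hm ha (by norm_num) (by norm_num) d1 d2) (by norm_num)
  · exact absurd (dset_uniq hm hb (by norm_num) (by norm_num) d0 d2) (by norm_num)
  · exact absurd (dset_uniq hm hb (by norm_num) (by norm_num) d0 d1) (by norm_num)
  · exact absurd (dset_uniq hm hb (by norm_num) (by norm_num) d0 d1) (by norm_num)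

end AuxStmt12

/-- If `m > 2` and `n > m + 1`, then `N^{(2)} ≠ N²`; more precisely
the product `ν` of all the variables `x_{i,j}`, `(i,j) ∈ V`, lies in `N^{(2)}` but
not in `N²`. -/
theorem stmt_12 (m n : ℕ) (hm : 2 < m) (hn : m + 1 < n) :
    symbolicPower (Nideal K m n) 2 ≠ Nideal K m n ^ 2 ∧
      (∏ p ∈ Vset m n, (X p : MvPolynomial (ℕ × ℕ) K)) ∈ symbolicPower (Nideal K m n) 2 ∧
      (∏ p ∈ Vset m n, (X p : MvPolynomial (ℕ × ℕ) K)) ∉ Nideal K m n ^ 2 := by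
  classical
  have hnot : (∏ p ∈ Vset m n, (X p : MvPolynomial (ℕ × ℕ) K)) ∉ Nideal K m n ^ 2 := by
    intro hmem
    have hJ : Nideal K m n ^ 2 ≤ Ideal.span ((fun s => monomial s (1 : K)) ''
        ((fun q => Finsupp.single q 2) '' (Vset m n : Set (ℕ × ℕ)))) := by
      rw [pow_two]
      unfold Nideal
      rw [Ideal.span_mul_span']
      rw [Ideal.span_le]
      rintro f hf
      rw [Set.mem_mul] at hf
      obtain ⟨f1, hf1, f2, hf2, rfl⟩ := hf
      obtain ⟨a, ha, rfl⟩ := hf1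
      obtain ⟨b, hb, rfl⟩ := hf2
      obtain ⟨x, hxa, hxb⟩ := exists_common hm hn ha hb
      have hxV : x ∈ Vset m n := (Finset.mem_sdiff.mp hxa).1
      have hx2 : ((X x : MvPolynomial (ℕ × ℕ) K)) ^ 2 ∈ Ideal.span ((fun s => monomial s (1 : K)) ''
          ((fun q => Finsupp.single q 2) '' (Vset m n : Set (ℕ × ℕ)))) := by
        rw [X_pow_eq_monomial]
        exact Ideal.subset_span ⟨_, ⟨x, by simpa using hxV, rfl⟩, rfl⟩
      rw [betaM, betaM, ← Finset.mul_prod_erase _ _ hxa, ← Finset.mul_prod_erase _ _ hxb]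
      have heq : (X x * ∏ p ∈ (Vset m n \ Dset m n a).erase x, (X p : MvPolynomial (ℕ × ℕ) K)) *
          (X x * ∏ p ∈ (Vset m n \ Dset m n b).erase x, (X p : MvPolynomial (ℕ × ℕ) K)) =
          (X x) ^ 2 * ((∏ p ∈ (Vset m n \ Dset m n a).erase x, X p) *
            (∏ p ∈ (Vset m n \ Dset m n b).erase x, X p)) := by ring
      rw [heq]
      exact Ideal.mul_mem_right _ _ hx2
    have hmem2 := hJ hmem
    rw [prodX, mem_ideal_span_monomial_image] at hmem2
    obtain ⟨si, hsi, hle⟩ := hmem2 (∑ p ∈ Vset m n, Finsupp.single p 1)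
      (by rw [support_monomial]; simp)
    obtain ⟨q, hq, rfl⟩ := hsi
    have hq' : q ∈ Vset m n := by simpa using hq
    have h2 := Finsupp.le_def.mp hle q
    rw [Finsupp.single_eq_same, sum_single_apply hq'] at h2
    omega
  have hin : (∏ p ∈ Vset m n, (X p : MvPolynomial (ℕ × ℕ) K)) ∈
      symbolicPower (Nideal K m n) 2 := by
    have hν : ∀ p : Ideal (MvPolynomial (ℕ × ℕ) K), p ∈ (Nideal K m n).minimalPrimes →
        (∏ q ∈ Vset m n, (X q : MvPolynomial (ℕ × ℕ) K)) ∈ p ^ 2 := by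
      intro p hp
      haveI : p.IsPrime := hp.1.1
      have hNp : Nideal K m n ≤ p := hp.1.2
      have hmV : ((m, 1) : ℕ × ℕ) ∈ Vset m n := by rw [mem_Vset]; simp; omega
      obtain ⟨a0, ha0, _⟩ := cover hm hn hmV
      have hb0 : betaM K m n a0 ∈ p := hNp (Ideal.subset_span ⟨a0, ha0, rfl⟩)
      rw [betaM, Ideal.IsPrime.prod_mem_iff] at hb0
      obtain ⟨x, hx, hXx⟩ := hb0
      have hxV : x ∈ Vset m n := (Finset.mem_sdiff.mp hx).1
      obtain ⟨a1, ha1, hxD⟩ := cover hm hn hxV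
      have hb1 : betaM K m n a1 ∈ p := hNp (Ideal.subset_span ⟨a1, ha1, rfl⟩)
      rw [betaM, Ideal.IsPrime.prod_mem_iff] at hb1
      obtain ⟨y, hy, hXy⟩ := hb1
      have hyV : y ∈ Vset m n := (Finset.mem_sdiff.mp hy).1
      have hxy : y ≠ x := by rintro rfl; exact (Finset.mem_sdiff.mp hy).2 hxD
      rw [← Finset.mul_prod_erase _ _ hxV,
        ← Finset.mul_prod_erase _ _ (Finset.mem_erase.mpr ⟨hxy, hyV⟩), ← mul_assoc]
      exact Ideal.mul_mem_right _ _ (by rw [pow_two]; exact Ideal.mul_mem_mul hXx hXy)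
    rw [symbolicPower, Submodule.mem_iInf]
    rintro ⟨p, hp⟩
    haveI : p.IsPrime := hp.1.1
    exact Ideal.mem_comap.mpr (Ideal.mem_map_of_mem _ (hν p hp))
  exact ⟨fun h => hnot (h ▸ hin), hin, hnot⟩
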